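/- arXiv:1212.1691 — 6 statements merged into one kernel-verified Lean document; each statement's English description precedes it below -/
import Mathlib

section
/- Assume 0 < d_* ≤ d^* < ∞. Then the form t_{X,β} is lower semibounded (i.e., there exists C ≥ 0 with t_{X,β}[f] ≥ −C ∫₀^∞|f|² dx for all f in its domain) if and only if sup_k (1/β_k)^− < ∞. -/
/-!
Testing the form on the function that rises linearly from `0` to `1` across a single cell
`Δ_k` and vanishes elsewhere gives `t[f] = 1/d_k + 1/β_k` while `‖f‖² ≤ d_k`, so a lower bound
`t ≥ -C‖·‖²` forces `(1/β_k)⁻ ≤ 1/d_* + C d^*`.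

Conversely, by Cauchy–Schwarz each one-sided value `f(x_k±)` differs from `f` on the adjacent
subinterval of length `h ≤ d_*` by at most `(h ∫_Δ |f'|²)^{1/2}`; averaging over that subinterval
gives `|f(x_k±)|² ≤ (2/h) ∫_Δ |f|² + 2h ∫_Δ |f'|²`. Summing over the cells,
`Σ |jumps|² ≤ (8/h) ‖f‖² + 8h ‖f'‖²`, and once `8h sup (1/β_k)⁻ ≤ 1` the kinetic term absorbs
the negative jump terms.
-/

open MeasureTheory Set Filter

noncomputable section

/-- A function that is *piecewise `H¹`* with respect to the partition points
`x 0 < x 1 < x 2 < ⋯` of `[0,∞)`: on each interval `Δ_{k+1} = [x k, x (k+1)]` it is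
absolutely continuous with derivative `f' ∈ L²`, encoded via the fundamental
theorem of calculus; `fr k = f(x k +)` and `fl (k+1) = f(x (k+1) −)` are the
one-sided limits at the nodes. -/
structure PW1 (x : ℕ → ℝ) where
  f : ℝ → ℝ
  f' : ℝ → ℝ
  fr : ℕ → ℝ
  fl : ℕ → ℝ
  int_d : ∀ k, IntegrableOn f' (Icc (x k) (x (k + 1))) volume
  sq_d : ∀ k, IntegrableOn (fun t => f' t ^ 2) (Icc (x k) (x (k + 1))) volume
  ftc : ∀ k, ∀ t ∈ Ioo (x k) (x (k + 1)), f t = fr k + ∫ s in Ioc (x k) t, f' s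
  fl_eq : ∀ k, fl (k + 1) = fr k + ∫ s in Ioc (x k) (x (k + 1)), f' s

/-- The jump `f(x_{k+1}+) − f(x_{k+1}−)` of a piecewise `H¹` function at the
interior node `x (k+1)` (the paper's node `x_{k+1}`). -/
def PW1.jump {x : ℕ → ℝ} (F : PW1 x) (k : ℕ) : ℝ := F.fr (k + 1) - F.fl (k + 1)

/-- Membership in the domain of the form `t_{X,β,q}`: `f ∈ L²(0,∞)`,
`∫₀^∞ |f'|² < ∞`, `∫₀^∞ |q| |f|² < ∞` and `Σ_k |f(x_k+) − f(x_k−)|²/|β_k| < ∞`. -/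
def MemDom (x : ℕ → ℝ) (q : ℝ → ℝ) (β : ℕ → ℝ) (F : PW1 x) : Prop :=
  IntegrableOn (fun t => F.f t ^ 2) (Ioi 0) volume ∧
  IntegrableOn (fun t => F.f' t ^ 2) (Ioi 0) volume ∧
  IntegrableOn (fun t => |q t| * F.f t ^ 2) (Ioi 0) volume ∧
  Summable (fun k => F.jump k ^ 2 / |β (k + 1)|)

/-- The value of the quadratic form
`t_{X,β,q}[f] = ∫₀^∞ (|f'|² + q |f|²) dx + Σ_k |f(x_k+) − f(x_k−)|²/β_k`. -/
def formVal (x : ℕ → ℝ) (q : ℝ → ℝ) (β : ℕ → ℝ) (F : PW1 x) : ℝ :=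
  (∫ t in Ioi (0 : ℝ), (F.f' t ^ 2 + q t * F.f t ^ 2)) +
    ∑' k, F.jump k ^ 2 / β (k + 1)

theorem sq_setIntegral_le {α : Type*} [MeasurableSpace α] {μ : Measure α} {s : Set α}
    {g : α → ℝ} (hs : μ s ≠ ⊤) (hg : IntegrableOn g s μ)
    (hg2 : IntegrableOn (fun x => g x ^ 2) s μ) :
    (∫ x in s, g x ∂μ) ^ 2 ≤ μ.real s * ∫ x in s, g x ^ 2 ∂μ := by
  rcases eq_or_ne (μ s) 0 with h0 | h0
  · simp [Measure.restrict_eq_zero.2 h0]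
  have hm : 0 < μ.real s := ENNReal.toReal_pos h0 hs
  have jensen := (even_two.convexOn_pow).map_set_average_le (continuous_pow 2).continuousOn
    isClosed_univ h0 hs (Eventually.of_forall fun x => mem_univ (g x)) hg hg2
  simp only [setAverage_eq, smul_eq_mul, ← div_eq_inv_mul] at jensen
  rw [div_pow, div_le_div_iff₀ (by positivity) hm, sq (μ.real s)] at jensen
  exact le_of_mul_le_mul_right (by linarith) hm

theorem sum_range_setIntegral_Ioc_le {x : ℕ → ℝ} (hx : Monotone x) {g : ℝ → ℝ}
    (hg : IntegrableOn g (Ioi (x 0))) (hg0 : 0 ≤ g) (N : ℕ) :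
    ∑ k ∈ Finset.range N, ∫ t in Ioc (x k) (x (k + 1)), g t ≤ ∫ t in Ioi (x 0), g t := by
  have hsub : ∀ {a b}, x 0 ≤ a → Ioc a b ⊆ Ioi (x 0) := fun ha _ ht => ha.trans_lt ht.1
  have hint : ∀ k, IntervalIntegrable g volume (x k) (x (k + 1)) := fun k =>
    (intervalIntegrable_iff_integrableOn_Ioc_of_le (hx k.le_succ)).2
      (hg.mono_set (hsub (hx k.zero_le)))
  calc ∑ k ∈ Finset.range N, ∫ t in Ioc (x k) (x (k + 1)), g t
      = ∑ k ∈ Finset.range N, ∫ t in x k..x (k + 1), g t :=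
        Finset.sum_congr rfl fun k _ => (intervalIntegral.integral_of_le (hx k.le_succ)).symm
    _ = ∫ t in Ioc (x 0) (x N), g t := by
        rw [intervalIntegral.sum_integral_adjacent_intervals fun k _ => hint k,
          intervalIntegral.integral_of_le (hx N.zero_le)]
    _ ≤ ∫ t in Ioi (x 0), g t :=
        setIntegral_mono_set hg (Eventually.of_forall hg0) (hsub le_rfl).eventuallyLE

theorem sq_le_of_forall_sq_sub_le {α : Type*} [MeasurableSpace α] {μ : Measure α} {s : Set α}
    {f : α → ℝ} {v K : ℝ} (hs : MeasurableSet s) (hs0 : 0 < μ.real s)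
    (hf : IntegrableOn (fun x => f x ^ 2) s μ) (hv : ∀ x ∈ s, (v - f x) ^ 2 ≤ K) :
    v ^ 2 ≤ 2 / μ.real s * ∫ x in s, f x ^ 2 ∂μ + 2 * K := by
  have hfin : μ s ≠ ⊤ := (ENNReal.toReal_pos_iff.1 hs0).2.ne
  have hpt : ∀ x ∈ s, v ^ 2 / 2 - K ≤ f x ^ 2 := fun x hx => by
    nlinarith [hv x hx, sq_nonneg (v - 2 * f x)]
  have := setIntegral_ge_of_const_le_real hs hfin hpt hf
  rw [div_mul_eq_mul_div, ← sub_le_iff_le_add, le_div_iff₀ hs0]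
  linarith

theorem sq_indicator {α : Type*} (s : Set α) (g : α → ℝ) (t : α) :
    s.indicator g t ^ 2 = s.indicator (fun t => g t ^ 2) t := by
  by_cases ht : t ∈ s <;> simp [ht]

theorem setIntegral_Ioc_indicator_cell {x : ℕ → ℝ} (hx : Monotone x) {j k : ℕ} {t : ℝ}
    (hjt : x j ≤ t) (htj : t ≤ x (j + 1)) (c : ℝ) :
    ∫ s in Ioc (x j) t, (Ioc (x k) (x (k + 1))).indicator (fun _ => c) s =
      if j = k then c * (t - x j) else 0 := by
  rw [setIntegral_indicator measurableSet_Ioc, Ioc_inter_Ioc]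
  split_ifs with hjk
  · subst hjk
    simp [min_eq_left htj, hjt, mul_comm]
  · have hempty : min t (x (k + 1)) ≤ max (x j) (x k) := by
      rcases Nat.lt_or_gt_of_ne hjk with hlt | hgt
      · exact (min_le_left _ _).trans (htj.trans ((hx hlt).trans (le_max_right _ _)))
      · exact (min_le_right _ _).trans ((hx hgt).trans (le_max_left _ _))
    simp [Ioc_eq_empty (not_lt.2 hempty)]

theorem eq_of_mem_Ioo_of_mem_Ioc {x : ℕ → ℝ} (hx : Monotone x) {j k : ℕ} {t : ℝ}
    (hj : t ∈ Ioo (x j) (x (j + 1))) (hk : t ∈ Ioc (x k) (x (k + 1))) : j = k := by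
  by_contra hjk
  rcases Nat.lt_or_gt_of_ne hjk with hlt | hgt
  · linarith [hx (Nat.succ_le_of_lt hlt), hj.2, hk.1]
  · linarith [hx (Nat.succ_le_of_lt hgt), hj.1, hk.2]

theorem Ioc_subset_Ioi_zero {x : ℕ → ℝ} (hx0 : x 0 = 0) (hx : Monotone x) (k : ℕ) :
    Ioc (x k) (x (k + 1)) ⊆ Ioi 0 := fun _ ht =>
  (hx0 ▸ hx k.zero_le).trans_lt ht.1

namespace PW1

variable {x : ℕ → ℝ} (F : PW1 x)

theorem sq_setIntegral_deriv_le {k : ℕ} {u w : ℝ} (hu : x k ≤ u) (huw : u ≤ w)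
    (hw : w ≤ x (k + 1)) :
    (∫ s in Ioc u w, F.f' s) ^ 2 ≤ (w - u) * ∫ s in Ioc (x k) (x (k + 1)), F.f' s ^ 2 := by
  have hsub : Ioc u w ⊆ Icc (x k) (x (k + 1)) := fun s hs => ⟨hu.trans hs.1.le, hs.2.trans hw⟩
  have hvol : volume.real (Ioc u w) = w - u := by simp [huw]
  calc (∫ s in Ioc u w, F.f' s) ^ 2 ≤ (w - u) * ∫ s in Ioc u w, F.f' s ^ 2 := by
        simpa only [hvol] using sq_setIntegral_le (by simp) ((F.int_d k).mono_set hsub)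
          ((F.sq_d k).mono_set hsub)
    _ ≤ (w - u) * ∫ s in Ioc (x k) (x (k + 1)), F.f' s ^ 2 := by
        refine mul_le_mul_of_nonneg_left ?_ (sub_nonneg.2 huw)
        exact setIntegral_mono_set ((F.sq_d k).mono_set Ioc_subset_Icc_self)
          (Eventually.of_forall fun s => sq_nonneg _) (Ioc_subset_Ioc hu hw).eventuallyLE

def traceBound (h : ℝ) (k : ℕ) : ℝ :=
  2 / h * (∫ t in Ioc (x k) (x (k + 1)), F.f t ^ 2) +
    2 * h * ∫ t in Ioc (x k) (x (k + 1)), F.f' t ^ 2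

theorem sq_le_traceBound_of_sq_sub_le {h c v : ℝ} {k : ℕ} (hh : 0 < h)
    (hsub : Ioo c (c + h) ⊆ Ioc (x k) (x (k + 1)))
    (hf : IntegrableOn (fun t => F.f t ^ 2) (Ioc (x k) (x (k + 1))))
    (hv : ∀ t ∈ Ioo c (c + h),
      (v - F.f t) ^ 2 ≤ h * ∫ s in Ioc (x k) (x (k + 1)), F.f' s ^ 2) :
    v ^ 2 ≤ F.traceBound h k := by
  have hvol : volume.real (Ioo c (c + h)) = h := by simp [hh.le]
  have key :=
    sq_le_of_forall_sq_sub_le measurableSet_Ioo (hvol.symm ▸ hh) (hf.mono_set hsub) hv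
  have hmono : ∫ t in Ioo c (c + h), F.f t ^ 2 ≤ ∫ t in Ioc (x k) (x (k + 1)), F.f t ^ 2 :=
    setIntegral_mono_set hf (Eventually.of_forall fun t => sq_nonneg _) hsub.eventuallyLE
  rw [hvol, ← mul_assoc] at key
  unfold traceBound
  exact key.trans (add_le_add_left (mul_le_mul_of_nonneg_left hmono (by positivity)) _)

theorem sq_fr_le_traceBound {h : ℝ} {k : ℕ} (hh : 0 < h) (hk : x k + h ≤ x (k + 1))
    (hf : IntegrableOn (fun t => F.f t ^ 2) (Ioc (x k) (x (k + 1)))) :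
    F.fr k ^ 2 ≤ F.traceBound h k := by
  refine F.sq_le_traceBound_of_sq_sub_le hh (fun t ht => ⟨ht.1, ht.2.le.trans hk⟩) hf
    fun t ht => ?_
  have ht' : t ∈ Ioo (x k) (x (k + 1)) := ⟨ht.1, ht.2.trans_le hk⟩
  rw [F.ftc k t ht', sub_add_cancel_left, neg_sq]
  calc _ ≤ (t - x k) * ∫ s in Ioc (x k) (x (k + 1)), F.f' s ^ 2 :=
        F.sq_setIntegral_deriv_le le_rfl ht.1.le ht'.2.le
    _ ≤ h * ∫ s in Ioc (x k) (x (k + 1)), F.f' s ^ 2 := by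
        refine mul_le_mul_of_nonneg_right (by linarith [ht.2]) ?_
        exact setIntegral_nonneg measurableSet_Ioc fun s _ => sq_nonneg _

theorem sq_fl_le_traceBound {h : ℝ} {k : ℕ} (hh : 0 < h) (hk : x k + h ≤ x (k + 1))
    (hf : IntegrableOn (fun t => F.f t ^ 2) (Ioc (x k) (x (k + 1)))) :
    F.fl (k + 1) ^ 2 ≤ F.traceBound h k := by
  refine F.sq_le_traceBound_of_sq_sub_le hh (c := x (k + 1) - h)
    (fun t ht => ⟨by linarith [ht.1], by linarith [ht.2]⟩) hf fun t ht => ?_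
  rw [sub_add_cancel] at ht
  have ht' : t ∈ Ioo (x k) (x (k + 1)) := ⟨by linarith [ht.1], ht.2⟩
  have hint : IntegrableOn F.f' (Ioc (x k) (x (k + 1))) :=
    (F.int_d k).mono_set Ioc_subset_Icc_self
  have hsplit : ∫ s in Ioc (x k) (x (k + 1)), F.f' s =
      (∫ s in Ioc (x k) t, F.f' s) + ∫ s in Ioc t (x (k + 1)), F.f' s := by
    rw [← setIntegral_union (Ioc_disjoint_Ioc_of_le le_rfl) measurableSet_Ioc
      (hint.mono_set (Ioc_subset_Ioc_right ht'.2.le))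
      (hint.mono_set (Ioc_subset_Ioc_left ht'.1.le)), Ioc_union_Ioc_eq_Ioc ht'.1.le ht'.2.le]
  rw [F.fl_eq k, F.ftc k t ht', hsplit, add_sub_add_left_eq_sub, add_sub_cancel_left]
  calc _ ≤ (x (k + 1) - t) * ∫ s in Ioc (x k) (x (k + 1)), F.f' s ^ 2 :=
        F.sq_setIntegral_deriv_le ht'.1.le ht'.2.le le_rfl
    _ ≤ h * ∫ s in Ioc (x k) (x (k + 1)), F.f' s ^ 2 := by
        refine mul_le_mul_of_nonneg_right (by linarith [ht.1]) ?_
        exact setIntegral_nonneg measurableSet_Ioc fun s _ => sq_nonneg _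

theorem traceBound_nonneg {h : ℝ} (hh : 0 < h) (k : ℕ) : 0 ≤ F.traceBound h k := by
  unfold traceBound
  have := setIntegral_nonneg (μ := volume) (measurableSet_Ioc (a := x k) (b := x (k + 1)))
    fun t _ => sq_nonneg (F.f t)
  have := setIntegral_nonneg (μ := volume) (measurableSet_Ioc (a := x k) (b := x (k + 1)))
    fun t _ => sq_nonneg (F.f' t)
  positivity

theorem sq_jump_le {h : ℝ} (hh : 0 < h) (hcell : ∀ k, x k + h ≤ x (k + 1))
    (hf : ∀ k, IntegrableOn (fun t => F.f t ^ 2) (Ioc (x k) (x (k + 1)))) (k : ℕ) :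
    F.jump k ^ 2 ≤ 2 * (F.traceBound h (k + 1) + F.traceBound h k) := by
  have hr := F.sq_fr_le_traceBound hh (hcell (k + 1)) (hf (k + 1))
  have hl := F.sq_fl_le_traceBound hh (hcell k) (hf k)
  unfold jump
  nlinarith [sq_nonneg (F.fr (k + 1) + F.fl (k + 1))]

theorem sum_range_traceBound_le (hx0 : x 0 = 0) (hx : Monotone x) {h : ℝ} (hh : 0 < h)
    (hf : IntegrableOn (fun t => F.f t ^ 2) (Ioi 0))
    (hf' : IntegrableOn (fun t => F.f' t ^ 2) (Ioi 0)) (N : ℕ) :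
    ∑ k ∈ Finset.range N, F.traceBound h k ≤
      2 / h * (∫ t in Ioi 0, F.f t ^ 2) + 2 * h * ∫ t in Ioi 0, F.f' t ^ 2 := by
  rw [← hx0] at hf hf' ⊢
  simp only [traceBound, Finset.sum_add_distrib, ← Finset.mul_sum]
  gcongr
  · exact sum_range_setIntegral_Ioc_le hx hf (fun t => sq_nonneg _) N
  · exact sum_range_setIntegral_Ioc_le hx hf' (fun t => sq_nonneg _) N

theorem sum_range_sq_jump_le (hx0 : x 0 = 0) (hx : Monotone x) {h : ℝ} (hh : 0 < h)
    (hcell : ∀ k, x k + h ≤ x (k + 1)) (hf : IntegrableOn (fun t => F.f t ^ 2) (Ioi 0))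
    (hf' : IntegrableOn (fun t => F.f' t ^ 2) (Ioi 0)) (N : ℕ) :
    ∑ k ∈ Finset.range N, F.jump k ^ 2 ≤
      4 * (2 / h * (∫ t in Ioi 0, F.f t ^ 2) + 2 * h * ∫ t in Ioi 0, F.f' t ^ 2) := by
  have hcellf : ∀ k, IntegrableOn (fun t => F.f t ^ 2) (Ioc (x k) (x (k + 1))) := fun k =>
    hf.mono_set (Ioc_subset_Ioi_zero hx0 hx k)
  set T := ∑ k ∈ Finset.range (N + 1), F.traceBound h k with hT
  have hshift : ∑ k ∈ Finset.range N, F.traceBound h (k + 1) ≤ T := by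
    rw [hT, Finset.sum_range_succ' _ N]
    linarith [F.traceBound_nonneg hh 0]
  have hinit : ∑ k ∈ Finset.range N, F.traceBound h k ≤ T := by
    rw [hT, Finset.sum_range_succ _ N]
    linarith [F.traceBound_nonneg hh N]
  calc ∑ k ∈ Finset.range N, F.jump k ^ 2
      ≤ ∑ k ∈ Finset.range N, 2 * (F.traceBound h (k + 1) + F.traceBound h k) :=
        Finset.sum_le_sum fun k _ => F.sq_jump_le hh hcell hcellf k
    _ ≤ 4 * T := by
        rw [← Finset.mul_sum, Finset.sum_add_distrib]
        linarith
    _ ≤ _ := by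
        gcongr
        exact F.sum_range_traceBound_le hx0 hx hh hf hf' (N + 1)

theorem formVal_zero (β : ℕ → ℝ) :
    formVal x (fun _ => 0) β F =
      (∫ t in Ioi 0, F.f' t ^ 2) + ∑' k, F.jump k ^ 2 / β (k + 1) := by
  simp [formVal]

theorem neg_mul_integral_le_formVal (hx0 : x 0 = 0) (hx : Monotone x) {β : ℕ → ℝ} {M h : ℝ}
    (hM0 : 0 ≤ M) (hM : ∀ k, -(β (k + 1))⁻¹ ≤ M) (hh : 0 < h) (hMh : 8 * M * h ≤ 1)
    (hcell : ∀ k, x k + h ≤ x (k + 1)) (hF : MemDom x (fun _ => 0) β F) :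
    -(8 * M / h) * ∫ t in Ioi 0, F.f t ^ 2 ≤ formVal x (fun _ => 0) β F := by
  obtain ⟨hf, hf', -, hβsum⟩ := hF
  set A := ∫ t in Ioi 0, F.f t ^ 2
  set B := ∫ t in Ioi 0, F.f' t ^ 2
  have hB : 0 ≤ B := setIntegral_nonneg measurableSet_Ioi fun t _ => sq_nonneg _
  have hpartial := F.sum_range_sq_jump_le hx0 hx hh hcell hf hf'
  have hjump : Summable fun k => F.jump k ^ 2 :=
    summable_of_sum_range_le (fun k => sq_nonneg _) hpartial
  have hsigned : Summable fun k => F.jump k ^ 2 / β (k + 1) := by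
    rw [← summable_abs_iff]
    simpa only [abs_div, abs_sq] using hβsum
  have hterm : ∀ k, -M * F.jump k ^ 2 ≤ F.jump k ^ 2 / β (k + 1) := fun k => by
    rw [div_eq_mul_inv]
    nlinarith [hM k, sq_nonneg (F.jump k)]
  have hneg : -M * (4 * (2 / h * A + 2 * h * B)) ≤ ∑' k, F.jump k ^ 2 / β (k + 1) := calc
    -M * (4 * (2 / h * A + 2 * h * B)) ≤ -M * ∑' k, F.jump k ^ 2 :=
      mul_le_mul_of_nonpos_left (Real.tsum_le_of_sum_range_le (fun k => sq_nonneg _) hpartial)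
        (neg_nonpos.2 hM0)
    _ = ∑' k, -M * F.jump k ^ 2 := tsum_mul_left.symm
    _ ≤ ∑' k, F.jump k ^ 2 / β (k + 1) := (hjump.mul_left _).tsum_le_tsum hterm hsigned
  have hexpand : -M * (4 * (2 / h * A + 2 * h * B)) = -(8 * M / h) * A - 8 * M * h * B := by
    ring
  rw [formVal_zero]
  linarith [mul_le_mul_of_nonneg_right hMh hB]

/-- Rises linearly from `0` to `1` across `Ioc (x k) (x (k + 1))` and vanishes elsewhere, so its
only jump is `-1`, at the node `x (k + 1)`. -/
def ramp (hx : StrictMono x) (k : ℕ) : PW1 x where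
  f := (Ioc (x k) (x (k + 1))).indicator fun t => (t - x k) / (x (k + 1) - x k)
  f' := (Ioc (x k) (x (k + 1))).indicator fun _ => (x (k + 1) - x k)⁻¹
  fr _ := 0
  fl j := if j = k + 1 then 1 else 0
  int_d _ := ((integrableOn_const (by simp)).integrable_indicator measurableSet_Ioc).integrableOn
  sq_d _ := by
    simp_rw [sq_indicator]
    exact ((integrableOn_const (by simp)).integrable_indicator measurableSet_Ioc).integrableOn
  ftc j t ht := by
    rw [setIntegral_Ioc_indicator_cell hx.monotone ht.1.le ht.2.le, zero_add]
    split_ifs with hjk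
    · subst hjk
      rw [indicator_of_mem (show t ∈ Ioc (x j) (x (j + 1)) from ⟨ht.1, ht.2.le⟩),
        div_eq_inv_mul]
    · exact indicator_of_notMem (fun hk => hjk (eq_of_mem_Ioo_of_mem_Ioc hx.monotone ht hk)) _
  fl_eq j := by
    rw [setIntegral_Ioc_indicator_cell hx.monotone (hx.monotone j.le_succ) le_rfl, zero_add]
    split_ifs with h₁ h₂ h₂
    · subst h₂
      exact (inv_mul_cancel₀ (sub_ne_zero.2 (hx j.lt_succ_self).ne')).symm
    · omega
    · omega
    · rfl

theorem ramp_jump (hx : StrictMono x) (k j : ℕ) :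
    (ramp hx k).jump j = if j = k then -1 else 0 := by
  simp only [jump, ramp, add_left_inj]
  split_ifs <;> simp

theorem integrableOn_ramp_sq (hx : StrictMono x) (k : ℕ) :
    IntegrableOn (fun t => (ramp hx k).f t ^ 2) (Ioi 0) := by
  simp_rw [ramp, sq_indicator]
  exact ((Continuous.integrableOn_Ioc (by fun_prop)).integrable_indicator
    measurableSet_Ioc).integrableOn

theorem integral_ramp_deriv_sq (hx0 : x 0 = 0) (hx : StrictMono x) (k : ℕ) :
    ∫ t in Ioi 0, (ramp hx k).f' t ^ 2 = (x (k + 1) - x k)⁻¹ := by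
  have hd : 0 < x (k + 1) - x k := sub_pos.2 (hx k.lt_succ_self)
  simp_rw [ramp, sq_indicator]
  rw [setIntegral_indicator measurableSet_Ioc,
    inter_eq_right.2 (Ioc_subset_Ioi_zero hx0 hx.monotone k)]
  simp [hd.le]
  field_simp

theorem integral_ramp_sq_le (hx0 : x 0 = 0) (hx : StrictMono x) (k : ℕ) :
    ∫ t in Ioi 0, (ramp hx k).f t ^ 2 ≤ x (k + 1) - x k := by
  have hd : 0 < x (k + 1) - x k := sub_pos.2 (hx k.lt_succ_self)
  simp_rw [ramp, sq_indicator]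
  rw [setIntegral_indicator measurableSet_Ioc,
    inter_eq_right.2 (Ioc_subset_Ioi_zero hx0 hx.monotone k)]
  calc ∫ t in Ioc (x k) (x (k + 1)), ((t - x k) / (x (k + 1) - x k)) ^ 2
      ≤ ∫ _ in Ioc (x k) (x (k + 1)), (1 : ℝ) := by
        refine setIntegral_mono_on (Continuous.integrableOn_Ioc (by fun_prop))
          (integrableOn_const (by simp)) measurableSet_Ioc fun t ht => ?_
        have h1 : 0 ≤ (t - x k) / (x (k + 1) - x k) := div_nonneg (by linarith [ht.1]) hd.le
        have h2 : (t - x k) / (x (k + 1) - x k) ≤ 1 := (div_le_one hd).2 (by linarith [ht.2])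
        nlinarith
    _ = x (k + 1) - x k := by simp [hd.le]

theorem ramp_memDom (hx : StrictMono x) (β : ℕ → ℝ) (k : ℕ) :
    MemDom x (fun _ => 0) β (ramp hx k) := by
  refine ⟨integrableOn_ramp_sq hx k, ?_, by simp, ?_⟩
  · simp_rw [ramp, sq_indicator]
    exact ((integrableOn_const (by simp)).integrable_indicator measurableSet_Ioc).integrableOn
  · refine summable_of_ne_finset_zero (s := {k}) fun j hj => ?_
    simp [ramp_jump hx, Finset.mem_singleton.not.1 hj]

theorem formVal_ramp (hx0 : x 0 = 0) (hx : StrictMono x) (β : ℕ → ℝ) (k : ℕ) :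
    formVal x (fun _ => 0) β (ramp hx k) = (x (k + 1) - x k)⁻¹ + (β (k + 1))⁻¹ := by
  rw [formVal_zero, integral_ramp_deriv_sq hx0 hx, tsum_eq_single k fun j hj => by
    simp [ramp_jump hx, hj]]
  simp [ramp_jump hx]

theorem neg_inv_le_of_forall_formVal_ge (hx0 : x 0 = 0) (hx : StrictMono x) {β : ℕ → ℝ} {C : ℝ}
    (hC : 0 ≤ C) (hbd : ∀ F : PW1 x, MemDom x (fun _ => 0) β F →
      formVal x (fun _ => 0) β F ≥ -C * ∫ t in Ioi (0 : ℝ), F.f t ^ 2) (k : ℕ) :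
    -(β (k + 1))⁻¹ ≤ (x (k + 1) - x k)⁻¹ + C * (x (k + 1) - x k) := by
  have h := hbd _ (ramp_memDom hx β k)
  rw [formVal_ramp hx0 hx] at h
  linarith [mul_le_mul_of_nonneg_left (integral_ramp_sq_le hx0 hx k) hC]

end PW1

theorem stmt_8_general (x : ℕ → ℝ) (hx0 : x 0 = 0) (hmono : StrictMono x)
    (β : ℕ → ℝ)
    (ε D : ℝ) (hε : 0 < ε)
    (hd : ∀ k, ε ≤ x (k + 1) - x k ∧ x (k + 1) - x k ≤ D) :
    (∃ C : ℝ, 0 ≤ C ∧ ∀ F : PW1 x, MemDom x (fun _ => 0) β F →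
        formVal x (fun _ => 0) β F ≥ -C * ∫ t in Ioi (0 : ℝ), F.f t ^ 2) ↔
      (∃ M : ℝ, ∀ k, max 0 (-(β (k + 1))⁻¹) ≤ M) := by
  constructor
  · rintro ⟨C, hC, hbd⟩
    have hD : 0 ≤ D := hε.le.trans ((hd 0).1.trans (hd 0).2)
    refine ⟨ε⁻¹ + C * D, fun k => max_le (by positivity) ?_⟩
    obtain ⟨hεk, hkD⟩ := hd k
    calc -(β (k + 1))⁻¹ ≤ (x (k + 1) - x k)⁻¹ + C * (x (k + 1) - x k) :=
          PW1.neg_inv_le_of_forall_formVal_ge hx0 hmono hC hbd k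
      _ ≤ ε⁻¹ + C * D := by gcongr
  · rintro ⟨M, hM⟩
    have hM0 : 0 ≤ M := (le_max_left _ _).trans (hM 0)
    set h := ε / (1 + 8 * M * ε)
    have hh : 0 < h := by positivity
    have hhε : h ≤ ε := div_le_self hε.le (le_add_of_nonneg_right (by positivity))
    have hMh : 8 * M * h ≤ 1 := by
      rw [mul_div_assoc', div_le_one (by positivity)]
      linarith
    refine ⟨8 * M / h, by positivity, fun F hF => ?_⟩
    exact F.neg_mul_integral_le_formVal hx0 hmono.monotone hM0
      (fun k => (le_max_right _ _).trans (hM k)) hh hMh (fun k => by linarith [(hd k).1]) hF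

/-- **Corollary 2.13** (Mikhailets): if `0 < d_* ≤ d^* < ∞`, then `t_{X,β}` is
lower semibounded iff `sup_k (1/β_k)⁻ < ∞`. -/
theorem stmt_8 (x : ℕ → ℝ) (hx0 : x 0 = 0) (hmono : StrictMono x)
    (hxtop : Tendsto x atTop atTop)
    (β : ℕ → ℝ) (hβ : ∀ k, β (k + 1) ≠ 0)
    (ε D : ℝ) (hε : 0 < ε)
    (hd : ∀ k, ε ≤ x (k + 1) - x k ∧ x (k + 1) - x k ≤ D) :
    (∃ C : ℝ, 0 ≤ C ∧ ∀ F : PW1 x, MemDom x (fun _ => 0) β F →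
        formVal x (fun _ => 0) β F ≥ -C * ∫ t in Ioi (0 : ℝ), F.f t ^ 2) ↔
      (∃ M : ℝ, ∀ k, max 0 (-(β (k + 1))⁻¹) ≤ M) :=
  stmt_8_general x hx0 hmono β ε D hε hd

end
end

section
/- Assume d^* < ∞, sup_j (k_{j+1} − k_j) = K < ∞, and lim_{k→∞} d_k = 0. If the form t_{X,β} is lower semibounded, i.e., there exists C ≥ 0 with t_{X,β}[f] ≥ −C ∫₀^∞|f|² dx for all f in its domain, then lim_{j→∞} 1/|β_{k_j}| = 0. -/
open MeasureTheory Set Filter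

noncomputable section

/-- `dminus x κ j` is the paper's `d_{j+1}^- = x_{k_{j+1}} − x_{k_j}` (with `k_0 = 0`),
the distance between the consecutive nodes `x_{k_j}` supporting negative
intensities; `κ j` is the paper's index `k_{j+1}`. -/
def dminus (x : ℕ → ℝ) (κ : ℕ → ℕ) : ℕ → ℝ
  | 0 => x (κ 0) - x 0
  | j + 1 => x (κ (j + 1)) - x (κ j)

/-- `kprev κ j` is the paper's `k_j` when `κ j` is the paper's `k_{j+1}`
(so `kprev κ 0 = k_0 = 0`). -/
def kprev (κ : ℕ → ℕ) : ℕ → ℕ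
  | 0 => 0
  | j + 1 => κ j

/-!
Test the form with the indicator function of `(x_a, x_b)` for two consecutive negative nodes
`a < b`. It has zero derivative and jumps only at `x_a` and `x_b`, so lower semiboundedness
gives `1/β_a + 1/β_b ≥ -C (x_b - x_a)`, hence `1/|β_a| ≤ C (x_b - x_a)` as `1/β_b < 0`.
For `a = k_j`, `b = k_{j+1}` the right-hand side is at most `C (x_{k_j + K} - x_{k_j})`,
a sum of `K` consecutive gaps `d_k`, which tends to `0`.
-/

open Topology

theorem tendsto_sub_add_of_tendsto_sub_succ {G : Type*} [TopologicalSpace G] [AddCommGroup G]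
    [IsTopologicalAddGroup G] {u : ℕ → G}
    (h : Tendsto (fun k => u (k + 1) - u k) atTop (𝓝 0)) (K : ℕ) :
    Tendsto (fun k => u (k + K) - u k) atTop (𝓝 0) := by
  induction K with
  | zero => simpa using tendsto_const_nhds
  | succ K ih =>
    have hstep := h.comp (tendsto_add_atTop_nat K)
    simpa [Function.comp_def, add_assoc] using hstep.add ih

theorem Monotone.mem_Ioo_iff_mem_Ico {α : Type*} [LinearOrder α] {x : ℕ → α}
    (hx : Monotone x) {a b k : ℕ} {t : α}
    (ht : t ∈ Ioo (x k) (x (k + 1))) : t ∈ Ioo (x a) (x b) ↔ k ∈ Ico a b := by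
  constructor
  · rintro ⟨hat, htb⟩
    exact ⟨Nat.lt_succ_iff.mp (hx.reflect_lt (hat.trans ht.2)), hx.reflect_lt (ht.1.trans htb)⟩
  · rintro ⟨hak, hkb⟩
    exact ⟨(hx hak).trans_lt ht.1, ht.2.trans_le (hx hkb)⟩

namespace PW1

variable {x : ℕ → ℝ}

def indicatorIoo (hx : Monotone x) (a b : ℕ) : PW1 x where
  f := (Ioo (x a) (x b)).indicator 1
  f' := 0
  fr := (Ico a b).indicator 1
  fl k := (Ico a b).indicator 1 (k - 1)
  int_d _ := integrableOn_zero
  sq_d _ := by simp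
  ftc k t ht := by
    simp only [Pi.zero_apply, integral_zero, add_zero, indicator_apply, Pi.one_apply,
      hx.mem_Ioo_iff_mem_Ico ht]
  fl_eq k := by simp

variable (hx : Monotone x) {a b : ℕ}

theorem jump_indicatorIoo (k : ℕ) :
    (indicatorIoo hx a b).jump k = (Ico a b).indicator 1 (k + 1) - (Ico a b).indicator 1 k := by
  simp [jump, indicatorIoo]

theorem jump_indicatorIoo_eq_zero {k : ℕ} (hk : k ∉ ({a - 1, b - 1} : Finset ℕ)) :
    (indicatorIoo hx a b).jump k = 0 := by
  simp only [Finset.mem_insert, Finset.mem_singleton, not_or] at hk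
  have hiff : k + 1 ∈ Ico a b ↔ k ∈ Ico a b := by simp only [mem_Ico]; omega
  simp only [jump_indicatorIoo, indicator_apply, Pi.one_apply, hiff, sub_self]

theorem tsum_jump_indicatorIoo (β : ℕ → ℝ) (ha : 1 ≤ a) (hab : a < b) :
    ∑' k, (indicatorIoo hx a b).jump k ^ 2 / β (k + 1) = 1 / β a + 1 / β b := by
  have hzero : ∀ k ∉ ({a - 1, b - 1} : Finset ℕ),
      (indicatorIoo hx a b).jump k ^ 2 / β (k + 1) = 0 := by
    intro k hk
    simp [jump_indicatorIoo_eq_zero hx hk]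
  rw [tsum_eq_sum hzero, Finset.sum_pair (by omega), jump_indicatorIoo, jump_indicatorIoo,
    Nat.sub_add_cancel ha, Nat.sub_add_cancel (ha.trans hab.le)]
  simp [hab, Nat.sub_lt_iff_lt_add ha, Nat.le_sub_one_of_lt hab, hab.pos]

theorem sq_f_indicatorIoo (t : ℝ) :
    (indicatorIoo hx a b).f t ^ 2 = (indicatorIoo hx a b).f t := by
  by_cases ht : t ∈ Ioo (x a) (x b) <;> simp [indicatorIoo, ht]

theorem integral_sq_indicatorIoo (hab : a ≤ b) (hxa : 0 ≤ x a) :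
    ∫ t in Ioi (0 : ℝ), (indicatorIoo hx a b).f t ^ 2 = x b - x a := by
  have hsub : Ioo (x a) (x b) ⊆ Ioi 0 := fun t ht => hxa.trans_lt ht.1
  simp_rw [sq_f_indicatorIoo, indicatorIoo]
  rw [integral_indicator_one measurableSet_Ioo, measureReal_restrict_apply measurableSet_Ioo,
    inter_eq_left.2 hsub, Real.volume_real_Ioo_of_le (hx hab)]

theorem memDom_indicatorIoo (β : ℕ → ℝ) :
    MemDom x (fun _ => 0) β (indicatorIoo hx a b) := by
  refine ⟨?_, by simp [indicatorIoo], by simp, ?_⟩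
  · simp_rw [sq_f_indicatorIoo]
    exact (integrable_indicator_iff measurableSet_Ioo).2
      (integrableOn_const (C := (1 : ℝ)) measure_Ioo_lt_top.ne) |>.integrableOn
  · refine summable_of_ne_finset_zero (s := {a - 1, b - 1}) fun k hk => ?_
    simp [jump_indicatorIoo_eq_zero hx hk]

theorem formVal_indicatorIoo (β : ℕ → ℝ) (ha : 1 ≤ a) (hab : a < b) :
    formVal x (fun _ => 0) β (indicatorIoo hx a b) = 1 / β a + 1 / β b := by
  rw [formVal, ← tsum_jump_indicatorIoo hx β ha hab]
  simp [indicatorIoo]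

end PW1

def FormBoundedBelow (x : ℕ → ℝ) (β : ℕ → ℝ) (C : ℝ) : Prop :=
  ∀ F : PW1 x, MemDom x (fun _ => 0) β F →
    formVal x (fun _ => 0) β F ≥ -C * ∫ t in Ioi (0 : ℝ), F.f t ^ 2

theorem one_div_abs_le_of_formBoundedBelow {x β : ℕ → ℝ} {C : ℝ}
    (hsb : FormBoundedBelow x β C) (hx : Monotone x) {a b : ℕ} (hxa : 0 ≤ x a) (ha : 1 ≤ a)
    (hab : a < b) (hβa : β a < 0) (hβb : β b < 0) :
    1 / |β a| ≤ C * (x b - x a) := by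
  have hform := hsb (PW1.indicatorIoo hx a b) (PW1.memDom_indicatorIoo hx β)
  rw [PW1.formVal_indicatorIoo hx β ha hab, PW1.integral_sq_indicatorIoo hx hab.le hxa] at hform
  have hb : 1 / β b < 0 := one_div_neg.2 hβb
  rw [abs_of_neg hβa, one_div_neg_eq_neg_one_div]
  linarith

theorem stmt_9_general (x : ℕ → ℝ) (hx0 : x 0 = 0) (hmono : StrictMono x)
    (β : ℕ → ℝ)
    (κ : ℕ → ℕ) (hκmono : StrictMono κ) (hκ1 : ∀ j, 1 ≤ κ j)
    (hκneg : ∀ j, β (κ j) < 0)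
    (K : ℕ) (hK : ∀ j, κ (j + 1) ≤ κ j + K)
    (hd0 : Tendsto (fun k => x (k + 1) - x k) atTop (nhds 0))
    (C : ℝ) (hC : 0 ≤ C)
    (hsb : ∀ F : PW1 x, MemDom x (fun _ => 0) β F →
      formVal x (fun _ => 0) β F ≥ -C * ∫ t in Ioi (0 : ℝ), F.f t ^ 2) :
    Tendsto (fun j => 1 / |β (κ j)|) atTop (nhds 0) := by
  have hgap : Tendsto (fun j => C * (x (κ j + K) - x (κ j))) atTop (𝓝 0) := by
    simpa using
      ((tendsto_sub_add_of_tendsto_sub_succ hd0 K).comp hκmono.tendsto_atTop).const_mul C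
  refine squeeze_zero (fun j => by positivity) (fun j => ?_) hgap
  calc 1 / |β (κ j)| ≤ C * (x (κ (j + 1)) - x (κ j)) :=
        one_div_abs_le_of_formBoundedBelow hsb hmono.monotone
          (hx0 ▸ hmono.monotone (Nat.zero_le _)) (hκ1 j) (hκmono j.lt_succ_self)
          (hκneg j) (hκneg (j + 1))
    _ ≤ C * (x (κ j + K) - x (κ j)) := by gcongr; exact hmono.monotone (hK j)

/-- **Corollary 2.14**: if `d^* < ∞`, `sup_j (k_{j+1} − k_j) = K < ∞` and
`d_k → 0`, then lower semiboundedness of `t_{X,β}` forces `1/|β_{k_j}| → 0`. -/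
theorem stmt_9 (x : ℕ → ℝ) (hx0 : x 0 = 0) (hmono : StrictMono x)
    (hxtop : Tendsto x atTop atTop)
    (β : ℕ → ℝ) (hβ : ∀ k, β (k + 1) ≠ 0)
    (κ : ℕ → ℕ) (hκmono : StrictMono κ) (hκ1 : ∀ j, 1 ≤ κ j)
    (hκneg : ∀ j, β (κ j) < 0)
    (hκall : ∀ n, 1 ≤ n → β n < 0 → ∃ j, κ j = n)
    (D : ℝ) (hD : ∀ k, x (k + 1) - x k ≤ D)
    (K : ℕ) (hK : ∀ j, κ (j + 1) ≤ κ j + K)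
    (hd0 : Tendsto (fun k => x (k + 1) - x k) atTop (nhds 0))
    (C : ℝ) (hC : 0 ≤ C)
    (hsb : ∀ F : PW1 x, MemDom x (fun _ => 0) β F →
      formVal x (fun _ => 0) β F ≥ -C * ∫ t in Ioi (0 : ℝ), F.f t ^ 2) :
    Tendsto (fun j => 1 / |β (κ j)|) atTop (nhds 0) :=
  stmt_9_general x hx0 hmono β κ hκmono hκ1 hκneg K hK hd0 C hC hsb

end
end

section
/- Suppose there exists c ≥ 0 such that t_{X,β,q}[f] ≥ −c ∫₀^∞|f|² dx for all f in the domain of t_{X,β,q}. Then for every k ≥ 2 one has (1/d_k)(∫_{Δ_k} q(x) dx + 1/β_{k−1} + 1/β_k) ≥ −c, and for k = 1 one has (1/d_1)(∫_{Δ_1} q(x) dx + 1/β_1) ≥ −c. (This is the computation with the normalized indicator functions h_k = d_k^{−1/2} χ_{Δ_k} underlying the necessity of condition (1/d_k)(∫_{Δ_k} q dx + 1/β_{k−1} + 1/β_k) → ∞ for discreteness of the spectrum of H_{X,β,q}.) -/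
open MeasureTheory Set Filter

noncomputable section

/-!
Test the lower bound with the indicator `h` of the cell `Δ_{m+1} = (x m, x (m+1))`: its
derivative vanishes, `‖h‖² = d_{m+1}`, its potential energy is `∫_{Δ_{m+1}} q`, and it jumps by
`±1` exactly at the endpoints of the cell that are nodes (`x 0 = 0` is not one), contributing
`1/β` there. Dividing by `d_{m+1}` gives the bound.
-/

def PW1.cellIndicator {x : ℕ → ℝ} (hx : Monotone x) (m : ℕ) : PW1 x where
  f := (Ioo (x m) (x (m + 1))).indicator 1
  f' := 0
  fr k := if k = m then 1 else 0
  fl k := if k = m + 1 then 1 else 0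
  int_d _ := integrableOn_zero
  sq_d _ := by simp
  ftc k t ht := by
    by_cases hkm : k = m
    · subst hkm
      simp [indicator_of_mem ht]
    · have hdisj := hx.pairwise_disjoint_on_Ioo_succ hkm
      simp only [Function.onFun, Order.succ_eq_add_one] at hdisj
      simp [indicator_of_notMem (hdisj.notMem_of_mem_left ht), hkm]
  fl_eq k := by simp

namespace PW1

variable {x : ℕ → ℝ} (hx : Monotone x)

lemma cellIndicator_f_sq (m : ℕ) :
    (fun t => (cellIndicator hx m).f t ^ 2) = (Ioo (x m) (x (m + 1))).indicator 1 := by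
  ext t
  by_cases ht : t ∈ Ioo (x m) (x (m + 1)) <;> simp [cellIndicator, ht]

lemma cellIndicator_jump (m k : ℕ) :
    (cellIndicator hx m).jump k = (if k + 1 = m then 1 else 0) - (if k = m then 1 else 0) := by
  simp [jump, cellIndicator]

lemma tsum_jump_sq_div_cellIndicator_zero (β : ℕ → ℝ) :
    ∑' k, (cellIndicator hx 0).jump k ^ 2 / β (k + 1) = (β 1)⁻¹ := by
  rw [tsum_eq_single 0 fun k hk => by simp [cellIndicator_jump, hk]]
  simp [cellIndicator_jump]

lemma tsum_jump_sq_div_cellIndicator_succ (β : ℕ → ℝ) (j : ℕ) :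
    ∑' k, (cellIndicator hx (j + 1)).jump k ^ 2 / β (k + 1)
      = (β (j + 1))⁻¹ + (β (j + 2))⁻¹ := by
  have hj : j ≠ j + 1 := by omega
  rw [tsum_eq_sum (s := {j, j + 1}) fun k hk => by
    simp only [Finset.mem_insert, Finset.mem_singleton, not_or] at hk
    simp [cellIndicator_jump, hk.1, hk.2]]
  simp [Finset.sum_pair hj, cellIndicator_jump]

variable {q : ℝ → ℝ}

lemma memDom_cellIndicator (β : ℕ → ℝ) (m : ℕ)
    (hq : IntegrableOn q (Icc (x m) (x (m + 1)))) :
    MemDom x q β (cellIndicator hx m) := by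
  have hq_abs : (fun t => |q t| * (cellIndicator hx m).f t ^ 2)
      = (Ioo (x m) (x (m + 1))).indicator fun t => |q t| := by
    ext t
    by_cases ht : t ∈ Ioo (x m) (x (m + 1)) <;> simp [cellIndicator, ht]
  refine ⟨?_, ?_, ?_, ?_⟩
  · rw [cellIndicator_f_sq]
    exact ((integrable_indicator_iff measurableSet_Ioo).2
      (integrableOn_const measure_Ioo_lt_top.ne)).integrableOn
  · simp [cellIndicator]
  · rw [hq_abs]
    exact ((integrable_indicator_iff measurableSet_Ioo).2
      (IntegrableOn.mono_set hq.abs Ioo_subset_Icc_self)).integrableOn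
  · refine summable_of_ne_finset_zero (s := Finset.range (m + 2)) fun k hk => ?_
    simp only [Finset.mem_range, not_lt] at hk
    simp [cellIndicator_jump, show k + 1 ≠ m by omega, show k ≠ m by omega]

lemma integral_sq_cellIndicator (m : ℕ) (hxm : 0 ≤ x m) :
    ∫ t in Ioi (0 : ℝ), (cellIndicator hx m).f t ^ 2 = x (m + 1) - x m := by
  rw [cellIndicator_f_sq, setIntegral_indicator measurableSet_Ioo,
    inter_eq_self_of_subset_right (Ioo_subset_Ioi_self.trans (Ioi_subset_Ioi hxm))]
  simp [sub_nonneg.2 (hx m.le_succ)]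

lemma formVal_cellIndicator (β : ℕ → ℝ) (m : ℕ) (hxm : 0 ≤ x m) :
    formVal x q β (cellIndicator hx m)
      = (∫ t in Icc (x m) (x (m + 1)), q t)
        + ∑' k, (cellIndicator hx m).jump k ^ 2 / β (k + 1) := by
  have hintegrand :
      (fun t => (cellIndicator hx m).f' t ^ 2 + q t * (cellIndicator hx m).f t ^ 2)
        = (Ioo (x m) (x (m + 1))).indicator q := by
    ext t
    by_cases ht : t ∈ Ioo (x m) (x (m + 1)) <;> simp [cellIndicator, ht]
  rw [formVal, hintegrand, setIntegral_indicator measurableSet_Ioo,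
    inter_eq_self_of_subset_right (Ioo_subset_Ioi_self.trans (Ioi_subset_Ioi hxm)),
    integral_Icc_eq_integral_Ioo]

lemma cell_average_ge_of_form_ge {β : ℕ → ℝ} {c : ℝ} (hxs : StrictMono x) (m : ℕ)
    (hxm : 0 ≤ x m) (hq : IntegrableOn q (Icc (x m) (x (m + 1))))
    (hform : ∀ F : PW1 x, MemDom x q β F →
      formVal x q β F ≥ -c * ∫ t in Ioi (0 : ℝ), F.f t ^ 2) :
    (1 / (x (m + 1) - x m)) *
      ((∫ t in Icc (x m) (x (m + 1)), q t)
        + ∑' k, (cellIndicator hxs.monotone m).jump k ^ 2 / β (k + 1)) ≥ -c := by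
  have h := hform _ (memDom_cellIndicator hxs.monotone β m hq)
  rw [formVal_cellIndicator _ β m hxm, integral_sq_cellIndicator _ m hxm] at h
  rw [ge_iff_le, one_div, ← div_eq_inv_mul, le_div_iff₀ (sub_pos.2 (hxs m.lt_succ_self))]
  linarith

end PW1

theorem stmt_10_general (x : ℕ → ℝ) (hx0 : x 0 = 0) (hmono : StrictMono x)
    (q : ℝ → ℝ) (hq : ∀ a b : ℝ, 0 ≤ a → IntegrableOn q (Icc a b) volume)
    (β : ℕ → ℝ)
    (c : ℝ)
    (hsb : ∀ F : PW1 x, MemDom x q β F →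
      formVal x q β F ≥ -c * ∫ t in Ioi (0 : ℝ), F.f t ^ 2) :
    ((1 / (x 1 - x 0)) * ((∫ t in Icc (x 0) (x 1), q t) + (β 1)⁻¹) ≥ -c) ∧
    (∀ k, (1 / (x (k + 2) - x (k + 1))) *
      ((∫ t in Icc (x (k + 1)) (x (k + 2)), q t) + (β (k + 1))⁻¹ + (β (k + 2))⁻¹)
        ≥ -c) := by
  have hx_nonneg : ∀ m, 0 ≤ x m := fun m => hx0 ▸ hmono.monotone m.zero_le
  have hcell := fun m =>
    PW1.cell_average_ge_of_form_ge hmono m (hx_nonneg m) (hq _ _ (hx_nonneg m)) hsb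
  refine ⟨?_, fun k => ?_⟩
  · simpa [PW1.tsum_jump_sq_div_cellIndicator_zero] using hcell 0
  · simpa [PW1.tsum_jump_sq_div_cellIndicator_succ, add_assoc] using hcell (k + 1)

/-- **The test-function computation behind Proposition 3.3**: if
`t_{X,β,q}[f] ≥ −c ‖f‖²` on its domain, then testing with the normalized
indicators `h_k = d_k^{-1/2} χ_{Δ_k}` gives
`(1/d_k)(∫_{Δ_k} q + 1/β_{k−1} + 1/β_k) ≥ −c` for `k ≥ 2` and
`(1/d_1)(∫_{Δ_1} q + 1/β_1) ≥ −c` for `k = 1`. -/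
theorem stmt_10 (x : ℕ → ℝ) (hx0 : x 0 = 0) (hmono : StrictMono x)
    (hxtop : Tendsto x atTop atTop)
    (q : ℝ → ℝ) (hq : ∀ a b : ℝ, 0 ≤ a → IntegrableOn q (Icc a b) volume)
    (β : ℕ → ℝ) (hβ : ∀ k, β (k + 1) ≠ 0)
    (c : ℝ) (hc : 0 ≤ c)
    (hsb : ∀ F : PW1 x, MemDom x q β F →
      formVal x q β F ≥ -c * ∫ t in Ioi (0 : ℝ), F.f t ^ 2) :
    ((1 / (x 1 - x 0)) * ((∫ t in Icc (x 0) (x 1), q t) + (β 1)⁻¹) ≥ -c) ∧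
    (∀ k, (1 / (x (k + 2) - x (k + 1))) *
      ((∫ t in Icc (x (k + 1)) (x (k + 2)), q t) + (β (k + 1))⁻¹ + (β (k + 2))⁻¹)
        ≥ -c) :=
  stmt_10_general x hx0 hmono q hq β c hsb

end
end

section
/- Assume d^* < ∞, q ∈ L¹_loc([0,∞)) with q(x) ≥ 1 for a.e. x, and suppose that (a) for every ε > 0, ∫_x^{x+ε} q(t) dt → ∞ as x → ∞ (Molchanov's condition), and (b) (1/d_k)∫_{Δ_k} q(x) dx → ∞ as k → ∞. Then the tails of functions in the unit ball of the Neumann form are uniformly small: for every δ > 0 there exists p ∈ ℕ such that every piecewise H¹ function f with Σ_k ∫_{Δ_k}(|f'(x)|² + q(x)|f(x)|²) dx ≤ 1 satisfies ∫_{x_{p−1}}^∞ |f(x)|² dx ≤ δ. (This uniform tail estimate is the core of the sufficiency part of the discreteness criterion for the operator H^N_{X,q}.) -/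
open MeasureTheory Set Filter

noncomputable section

/-!
On a subinterval `J` of a cell, Cauchy–Schwarz bounds the oscillation of `f` by
`(f t - f s)² ≤ |J| ∫_J f'²`. Multiplying `f(t)² ≤ 2 f(s)² + 2 (f t - f s)²` by `q(s)` and
integrating in `s` and then in `t` gives
`(∫_J q) ∫_J f² ≤ 2 |J| ∫_J q f² + 2 |J|² (∫_J q) ∫_J f'²`,
so `∫_J f² ≤ δ ∫_J (f'² + q f²)` as soon as `2 |J|² ≤ δ` and `2 |J| ≤ δ ∫_J q`.
Fix `ε` with `8 ε² ≤ δ`. Far out, a cell of length `≤ ε` is itself such a `J` by condition (b);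
a longer cell is cut into equal pieces of length in `[ε, 2ε]`, each of which is such a `J` by
Molchanov's condition. Summing over the cells beyond `x_p` bounds the tail by `δ` times the form.
-/

theorem sq_integral_le_measureReal_mul_integral_sq {α : Type*} [MeasurableSpace α]
    {μ : Measure α} [IsFiniteMeasure μ] {f : α → ℝ} (hf : Integrable f μ)
    (hf2 : Integrable (fun a => f a ^ 2) μ) :
    (∫ a, f a ∂μ) ^ 2 ≤ μ.real univ * ∫ a, f a ^ 2 ∂μ := by
  rcases eq_zero_or_neZero μ with rfl | _
  · simp
  have hμ : μ.real univ ≠ 0 := measureReal_univ_pos.ne'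
  have jensen := (even_two.convexOn_pow (𝕜 := ℝ)).map_average_le (continuous_pow 2).continuousOn
    isClosed_univ (ae_of_all _ fun _ => mem_univ _) hf hf2
  simp only [average_eq, smul_eq_mul, mul_pow] at jensen
  calc (∫ a, f a ∂μ) ^ 2 = μ.real univ ^ 2 * ((μ.real univ)⁻¹ ^ 2 * (∫ a, f a ∂μ) ^ 2) := by
        field_simp
    _ ≤ μ.real univ ^ 2 * ((μ.real univ)⁻¹ * ∫ a, f a ^ 2 ∂μ) := by gcongr
    _ = μ.real univ * ∫ a, f a ^ 2 ∂μ := by field_simp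

theorem sq_sub_le_of_eq_intervalIntegral {f f' : ℝ → ℝ} {a b : ℝ}
    (hf' : IntegrableOn f' (Ioo a b)) (hf'2 : IntegrableOn (fun t => f' t ^ 2) (Ioo a b))
    (hftc : ∀ s ∈ Ioo a b, ∀ t ∈ Ioo a b, f t - f s = ∫ u in s..t, f' u)
    {s t : ℝ} (hs : s ∈ Ioo a b) (ht : t ∈ Ioo a b) :
    (f t - f s) ^ 2 ≤ (b - a) * ∫ u in Ioo a b, f' u ^ 2 := by
  wlog hst : s ≤ t generalizing s t
  · rw [← neg_sub, neg_sq]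
    exact this ht hs (le_of_not_ge hst)
  have hsub : Ioc s t ⊆ Ioo a b := fun u hu => ⟨hs.1.trans hu.1, hu.2.trans_lt ht.2⟩
  have : IsFiniteMeasure (volume.restrict (Ioc s t)) :=
    isFiniteMeasure_restrict.2 measure_Ioc_lt_top.ne
  have hcs := sq_integral_le_measureReal_mul_integral_sq (hf'.mono_set hsub) (hf'2.mono_set hsub)
  rw [measureReal_restrict_apply_univ, Real.volume_real_Ioc_of_le hst] at hcs
  rw [hftc s hs t ht, intervalIntegral.integral_of_le hst]
  refine hcs.trans (mul_le_mul (by linarith [hs.1, ht.2]) ?_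
    (integral_nonneg fun _ => sq_nonneg _) (by linarith [hs.1, hs.2]))
  exact setIntegral_mono_set hf'2 (ae_of_all _ fun _ => sq_nonneg _) hsub.eventuallyLE

theorem mul_integral_sq_le_of_sq_sub_le {f q : ℝ → ℝ} {a b M : ℝ} (hab : a ≤ b)
    (hf2 : IntegrableOn (fun t => f t ^ 2) (Ioo a b)) (hq : IntegrableOn q (Ioo a b))
    (hqf2 : IntegrableOn (fun t => q t * f t ^ 2) (Ioo a b))
    (hq0 : 0 ≤ᵐ[volume.restrict (Ioo a b)] q)
    (hosc : ∀ s ∈ Ioo a b, ∀ t ∈ Ioo a b, (f t - f s) ^ 2 ≤ M) :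
    (∫ t in Ioo a b, q t) * ∫ t in Ioo a b, f t ^ 2 ≤
      (b - a) * (2 * (∫ t in Ioo a b, q t * f t ^ 2) + 2 * M * ∫ t in Ioo a b, q t) := by
  have hpt : ∀ t ∈ Ioo a b, (∫ s in Ioo a b, q s) * f t ^ 2 ≤
      2 * (∫ s in Ioo a b, q s * f s ^ 2) + 2 * M * ∫ s in Ioo a b, q s := by
    intro t ht
    calc (∫ s in Ioo a b, q s) * f t ^ 2 = ∫ s in Ioo a b, f t ^ 2 * q s := by
          rw [integral_const_mul, mul_comm]
      _ ≤ ∫ s in Ioo a b, (2 * (q s * f s ^ 2) + 2 * M * q s) := by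
          refine integral_mono_ae (hq.const_mul _) ((hqf2.const_mul 2).add (hq.const_mul _)) ?_
          filter_upwards [hq0, ae_restrict_mem measurableSet_Ioo] with s hqs hs
          have hsq : f t ^ 2 ≤ 2 * f s ^ 2 + 2 * M := by
            nlinarith [hosc s hs t ht, sq_nonneg (f t - 2 * f s)]
          nlinarith [mul_le_mul_of_nonneg_left hsq hqs]
      _ = 2 * (∫ s in Ioo a b, q s * f s ^ 2) + 2 * M * ∫ s in Ioo a b, q s := by
          rw [integral_add (hqf2.const_mul 2) (hq.const_mul _), integral_const_mul,
            integral_const_mul]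
  rw [← integral_const_mul, ← smul_eq_mul (b - a), ← Real.volume_real_Ioo_of_le hab,
    ← setIntegral_const]
  exact setIntegral_mono_on (hf2.const_mul _) (integrableOn_const measure_Ioo_lt_top.ne)
    measurableSet_Ioo hpt

theorem integral_sq_le_of_eq_intervalIntegral {f f' q : ℝ → ℝ} {a b δ : ℝ} (hab : a < b)
    (hf' : IntegrableOn f' (Ioo a b)) (hf'2 : IntegrableOn (fun t => f' t ^ 2) (Ioo a b))
    (hftc : ∀ s ∈ Ioo a b, ∀ t ∈ Ioo a b, f t - f s = ∫ u in s..t, f' u)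
    (hf2 : IntegrableOn (fun t => f t ^ 2) (Ioo a b)) (hq : IntegrableOn q (Ioo a b))
    (hqf2 : IntegrableOn (fun t => q t * f t ^ 2) (Ioo a b))
    (hq0 : 0 ≤ᵐ[volume.restrict (Ioo a b)] q)
    (hlen : 2 * (b - a) ^ 2 ≤ δ) (hmass : 2 * (b - a) ≤ δ * ∫ t in Ioo a b, q t) :
    ∫ t in Ioo a b, f t ^ 2 ≤ δ * ∫ t in Ioo a b, (f' t ^ 2 + q t * f t ^ 2) := by
  have hE : 0 ≤ ∫ t in Ioo a b, f' t ^ 2 := integral_nonneg fun _ => sq_nonneg _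
  have hJ : 0 ≤ ∫ t in Ioo a b, q t * f t ^ 2 := integral_nonneg_of_ae <| by
    filter_upwards [hq0] with t ht using mul_nonneg ht (sq_nonneg _)
  have hQ : 0 < ∫ t in Ioo a b, q t := by
    refine (integral_nonneg_of_ae hq0).lt_of_ne fun h => ?_
    rw [← h, mul_zero] at hmass
    linarith
  have key := mul_integral_sq_le_of_sq_sub_le hab.le hf2 hq hqf2 hq0
    fun s hs t ht => sq_sub_le_of_eq_intervalIntegral hf' hf'2 hftc hs ht
  rw [integral_add hf'2 hqf2]
  refine le_of_mul_le_mul_left (key.trans ?_) hQ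
  nlinarith [mul_le_mul_of_nonneg_right hmass hJ,
    mul_le_mul_of_nonneg_right hlen (mul_nonneg hE hQ.le)]

theorem exists_nat_pos_div_mem_Icc {d ε : ℝ} (hε : 0 < ε) (hεd : ε ≤ d) :
    ∃ n : ℕ, 0 < n ∧ d / n ∈ Icc ε (2 * ε) := by
  have hd : 1 ≤ d / ε := (one_le_div hε).2 hεd
  have hn : (1 : ℝ) ≤ ⌊d / ε⌋₊ := by exact_mod_cast Nat.le_floor (by exact_mod_cast hd)
  refine ⟨⌊d / ε⌋₊, by exact_mod_cast hn, ?_, ?_⟩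
  · rw [le_div_iff₀ (by linarith), ← le_div_iff₀' hε]
    exact Nat.floor_le (by linarith)
  · have hlt := Nat.lt_floor_add_one (d / ε)
    rw [div_lt_iff₀ hε] at hlt
    rw [div_le_iff₀ (by linarith)]
    nlinarith

theorem intervalIntegral_eq_sum_integral_Ioo {φ : ℝ → ℝ} {y : ℕ → ℝ} {n : ℕ} (hy : Monotone y)
    (hφ : ∀ j < n, IntegrableOn φ (Ioo (y j) (y (j + 1)))) :
    ∫ t in y 0..y n, φ t = ∑ j ∈ Finset.range n, ∫ t in Ioo (y j) (y (j + 1)), φ t := by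
  rw [← intervalIntegral.sum_integral_adjacent_intervals fun j hj =>
    (intervalIntegrable_iff_integrableOn_Ioo_of_le (hy j.le_succ)).2 (hφ j hj)]
  refine Finset.sum_congr rfl fun j _ => ?_
  rw [intervalIntegral.integral_of_le (hy j.le_succ), integral_Ioc_eq_integral_Ioo]

theorem integral_Ioo_le_of_partition {g h : ℝ → ℝ} {a b : ℝ} {y : ℕ → ℝ} {n : ℕ}
    (hy : Monotone y) (hy0 : y 0 = a) (hyn : y n = b)
    (hg : IntegrableOn g (Ioo a b)) (hh : IntegrableOn h (Ioo a b))
    (hgh : ∀ j < n, ∫ t in Ioo (y j) (y (j + 1)), g t ≤ ∫ t in Ioo (y j) (y (j + 1)), h t) :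
    ∫ t in Ioo a b, g t ≤ ∫ t in Ioo a b, h t := by
  subst hy0 hyn
  have hpiece : ∀ φ : ℝ → ℝ, IntegrableOn φ (Ioo (y 0) (y n)) →
      ∀ j < n, IntegrableOn φ (Ioo (y j) (y (j + 1))) := fun φ hφ j hj =>
    hφ.mono_set (Ioo_subset_Ioo (hy j.zero_le) (hy hj))
  simp only [← integral_Ioc_eq_integral_Ioo, ← intervalIntegral.integral_of_le (hy n.zero_le)]
  rw [intervalIntegral_eq_sum_integral_Ioo hy (hpiece g hg),
    intervalIntegral_eq_sum_integral_Ioo hy (hpiece h hh)]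
  exact Finset.sum_le_sum fun j hj => hgh j (Finset.mem_range.1 hj)

theorem integral_Ioi_le_tsum {g : ℝ → ℝ} {y : ℕ → ℝ} (hy : Monotone y)
    (hytop : Tendsto y atTop atTop) (hg0 : ∀ t, 0 ≤ g t)
    (hg : ∀ j, IntegrableOn g (Ioo (y j) (y (j + 1)))) {c : ℕ → ℝ} (hc : Summable c)
    (hgc : ∀ j, ∫ t in Ioo (y j) (y (j + 1)), g t ≤ c j) :
    ∫ t in Ioi (y 0), g t ≤ ∑' j, c j := by
  have hc0 : ∀ j, 0 ≤ c j := fun j =>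
    (setIntegral_nonneg measurableSet_Ioo fun t _ => hg0 t).trans (hgc j)
  have hpartial : ∀ n, ∫ t in y 0..y n, g t ≤ ∑' j, c j := fun n => by
    rw [intervalIntegral_eq_sum_integral_Ioo hy fun j _ => hg j]
    exact (Finset.sum_le_sum fun j _ => hgc j).trans (hc.sum_le_tsum _ fun j _ => hc0 j)
  have hint : ∀ n, IntegrableOn g (Ioc (y 0) (y n)) := fun n =>
    (intervalIntegrable_iff_integrableOn_Ioc_of_le (hy n.zero_le)).1
      (IntervalIntegrable.trans_iterate fun j _ =>
        (intervalIntegrable_iff_integrableOn_Ioo_of_le (hy j.le_succ)).2 (hg j))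
  have hnorm : (fun t => ‖g t‖) = g := funext fun t => Real.norm_of_nonneg (hg0 t)
  have hgi : IntegrableOn g (Ioi (y 0)) :=
    integrableOn_Ioi_of_intervalIntegral_norm_bounded _ _ hint hytop
      (Eventually.of_forall fun n => by simpa only [hnorm] using hpartial n)
  exact le_of_tendsto (intervalIntegral_tendsto_integral_Ioi _ hgi hytop)
    (Eventually.of_forall hpartial)

namespace PW1

variable {x : ℕ → ℝ} (F : PW1 x)

theorem exists_continuousOn_eqOn (k : ℕ) :
    ∃ g : ℝ → ℝ, ContinuousOn g (Icc (x k) (x (k + 1))) ∧ EqOn F.f g (Ioo (x k) (x (k + 1))) :=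
  ⟨_, continuousOn_const.add (intervalIntegral.continuousOn_primitive (F.int_d k)), F.ftc k⟩

theorem integrableOn_mul_sq {q : ℝ → ℝ} {k : ℕ} (hq : IntegrableOn q (Icc (x k) (x (k + 1)))) :
    IntegrableOn (fun t => q t * F.f t ^ 2) (Ioo (x k) (x (k + 1))) := by
  obtain ⟨g, hg, hfg⟩ := F.exists_continuousOn_eqOn k
  refine ((hq.mul_continuousOn (hg.pow 2) isCompact_Icc).mono_set Ioo_subset_Icc_self).congr_fun
    (fun t ht => ?_) measurableSet_Ioo
  simp only [hfg ht, Pi.pow_apply]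

theorem integrableOn_sq (k : ℕ) : IntegrableOn (fun t => F.f t ^ 2) (Ioo (x k) (x (k + 1))) := by
  simpa using F.integrableOn_mul_sq (q := 1) (integrableOn_const measure_Icc_lt_top.ne)

theorem sub_eq_intervalIntegral {k : ℕ} {s t : ℝ} (hs : s ∈ Ioo (x k) (x (k + 1)))
    (ht : t ∈ Ioo (x k) (x (k + 1))) : F.f t - F.f s = ∫ u in s..t, F.f' u := by
  have hint : ∀ u ∈ Ioo (x k) (x (k + 1)), IntervalIntegrable F.f' volume (x k) u := fun u hu =>
    (intervalIntegrable_iff_integrableOn_Icc_of_le hu.1.le).2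
      ((F.int_d k).mono_set (Icc_subset_Icc_right hu.2.le))
  rw [F.ftc k t ht, F.ftc k s hs, ← intervalIntegral.integral_of_le ht.1.le,
    ← intervalIntegral.integral_of_le hs.1.le,
    ← intervalIntegral.integral_interval_sub_left (hint t ht) (hint s hs)]
  ring

theorem integral_sq_Ioo_le {q : ℝ → ℝ} {k : ℕ} {a b δ : ℝ} (hka : x k ≤ a) (hab : a < b)
    (hbk : b ≤ x (k + 1)) (hq : IntegrableOn q (Icc (x k) (x (k + 1))))
    (hq0 : 0 ≤ᵐ[volume.restrict (Ioo (x k) (x (k + 1)))] q)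
    (hlen : 2 * (b - a) ^ 2 ≤ δ) (hmass : 2 * (b - a) ≤ δ * ∫ t in Ioo a b, q t) :
    ∫ t in Ioo a b, F.f t ^ 2 ≤ δ * ∫ t in Ioo a b, (F.f' t ^ 2 + q t * F.f t ^ 2) := by
  have hsub : Ioo a b ⊆ Ioo (x k) (x (k + 1)) := Ioo_subset_Ioo hka hbk
  have hsub' : Ioo a b ⊆ Icc (x k) (x (k + 1)) := hsub.trans Ioo_subset_Icc_self
  exact integral_sq_le_of_eq_intervalIntegral hab ((F.int_d k).mono_set hsub')
    ((F.sq_d k).mono_set hsub') (fun s hs t ht => F.sub_eq_intervalIntegral (hsub hs) (hsub ht))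
    ((F.integrableOn_sq k).mono_set hsub) (hq.mono_set hsub')
    ((F.integrableOn_mul_sq hq).mono_set hsub) (ae_restrict_of_ae_restrict_of_subset hsub hq0)
    hlen hmass

theorem integral_sq_Ioo_cell_le {q : ℝ → ℝ} {k : ℕ} {δ ε : ℝ} (hε : 0 < ε)
    (hεδ : 8 * ε ^ 2 ≤ δ) (hxk : x k < x (k + 1)) (hq : IntegrableOn q (Icc (x k) (x (k + 1))))
    (hq0 : 0 ≤ᵐ[volume.restrict (Ioo (x k) (x (k + 1)))] q)
    (hMol : ∀ y, x k ≤ y → 4 * ε ≤ δ * ∫ t in Icc y (y + ε), q t)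
    (hmean : 2 * (x (k + 1) - x k) ≤ δ * ∫ t in Icc (x k) (x (k + 1)), q t) :
    ∫ t in Ioo (x k) (x (k + 1)), F.f t ^ 2 ≤
      δ * ∫ t in Ioo (x k) (x (k + 1)), (F.f' t ^ 2 + q t * F.f t ^ 2) := by
  rcases le_or_gt (x (k + 1) - x k) ε with hshort | hlong
  · refine F.integral_sq_Ioo_le le_rfl hxk le_rfl hq hq0 (by nlinarith) ?_
    rwa [← integral_Icc_eq_integral_Ioo]
  obtain ⟨n, hn, hεℓ, hℓε⟩ := exists_nat_pos_div_mem_Icc hε hlong.le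
  set ℓ := (x (k + 1) - x k) / n
  set y : ℕ → ℝ := fun j => x k + j * ℓ
  have hy : Monotone y := fun i j hij => by
    simp only [y]
    gcongr
  have hy0 : y 0 = x k := by simp [y]
  have hyn : y n = x (k + 1) := by
    simp only [y, ℓ]
    field_simp
    ring
  have hδ : 0 ≤ δ := by nlinarith
  rw [← integral_const_mul]
  refine integral_Ioo_le_of_partition hy hy0 hyn (F.integrableOn_sq k)
    (((F.sq_d k).mono_set Ioo_subset_Icc_self).add (F.integrableOn_mul_sq hq) |>.const_mul δ)
    fun j hj => ?_
  have hyj : x k ≤ y j := hy0 ▸ hy j.zero_le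
  have hyj' : y (j + 1) ≤ x (k + 1) := hyn ▸ hy hj
  have hstep : y (j + 1) = y j + ℓ := by simp only [y]; push_cast; ring
  have hmol_le : ∫ t in Icc (y j) (y j + ε), q t ≤ ∫ t in Ioo (y j) (y (j + 1)), q t := by
    rw [integral_Icc_eq_integral_Ioo]
    refine setIntegral_mono_set ((hq.mono_set Ioo_subset_Icc_self).mono_set
      (Ioo_subset_Ioo hyj hyj')) (ae_restrict_of_ae_restrict_of_subset
      (Ioo_subset_Ioo hyj hyj') hq0) (Ioo_subset_Ioo_right (by linarith)).eventuallyLE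
  rw [integral_const_mul]
  refine F.integral_sq_Ioo_le hyj (by linarith) hyj' hq hq0 (by rw [hstep]; nlinarith) ?_
  calc 2 * (y (j + 1) - y j) ≤ 4 * ε := by linarith
    _ ≤ δ * ∫ t in Icc (y j) (y j + ε), q t := hMol _ hyj
    _ ≤ δ * ∫ t in Ioo (y j) (y (j + 1)), q t := by gcongr

theorem integral_Ioi_sq_le_mul_tsum {q : ℝ → ℝ} {δ : ℝ} (hmono : Monotone x)
    (hxtop : Tendsto x atTop atTop) (hq0 : ∀ k, 0 ≤ᵐ[volume.restrict (Ioo (x k) (x (k + 1)))] q)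
    (hsum : Summable fun k => ∫ t in Ioo (x k) (x (k + 1)), (F.f' t ^ 2 + q t * F.f t ^ 2))
    (hδ : 0 ≤ δ) (p : ℕ) (hcell : ∀ k, p ≤ k → ∫ t in Ioo (x k) (x (k + 1)), F.f t ^ 2 ≤
      δ * ∫ t in Ioo (x k) (x (k + 1)), (F.f' t ^ 2 + q t * F.f t ^ 2)) :
    ∫ t in Ioi (x p), F.f t ^ 2 ≤
      δ * ∑' k, ∫ t in Ioo (x k) (x (k + 1)), (F.f' t ^ 2 + q t * F.f t ^ 2) := by
  set a : ℕ → ℝ := fun k => ∫ t in Ioo (x k) (x (k + 1)), (F.f' t ^ 2 + q t * F.f t ^ 2)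
  have ha0 : ∀ k, 0 ≤ a k := fun k => integral_nonneg_of_ae <| by
    filter_upwards [hq0 k] with t ht using add_nonneg (sq_nonneg _) (mul_nonneg ht (sq_nonneg _))
  have htail : ∑' i, a (i + p) ≤ ∑' k, a k := by
    linarith [hsum.sum_add_tsum_nat_add p,
      Finset.sum_nonneg fun i (_ : i ∈ Finset.range p) => ha0 i]
  calc ∫ t in Ioi (x p), F.f t ^ 2 ≤ ∑' i, δ * a (i + p) := by
        simpa using integral_Ioi_le_tsum (g := fun t => F.f t ^ 2) (y := fun i => x (i + p))
          (fun i j hij => hmono (by omega)) (hxtop.comp (tendsto_add_atTop_nat p))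
          (fun t => sq_nonneg _)
          (fun i => by simpa only [Nat.add_right_comm] using F.integrableOn_sq (i + p))
          (((summable_nat_add_iff p).2 hsum).mul_left δ)
          (fun i => by simpa only [Nat.add_right_comm] using hcell (i + p) (by omega))
    _ = δ * ∑' i, a (i + p) := tsum_mul_left
    _ ≤ δ * ∑' k, a k := by gcongr

end PW1

theorem stmt_11_general (x : ℕ → ℝ) (hx0 : x 0 = 0) (hmono : StrictMono x)
    (hxtop : Tendsto x atTop atTop)
    (q : ℝ → ℝ) (hq : ∀ a b : ℝ, 0 ≤ a → IntegrableOn q (Icc a b) volume)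
    (hq1 : ∀ᵐ t ∂(volume.restrict (Ioi (0 : ℝ))), 1 ≤ q t)
    (hMol : ∀ ε > 0, Tendsto (fun X : ℝ => ∫ t in Icc X (X + ε), q t) atTop atTop)
    (hmean : Tendsto (fun k =>
      (1 / (x (k + 1) - x k)) * ∫ t in Icc (x k) (x (k + 1)), q t) atTop atTop) :
    ∀ δ > 0, ∃ p : ℕ, ∀ F : PW1 x,
      Summable (fun k => ∫ t in Ioo (x k) (x (k + 1)), (F.f' t ^ 2 + q t * F.f t ^ 2)) →
      (∑' k, ∫ t in Ioo (x k) (x (k + 1)), (F.f' t ^ 2 + q t * F.f t ^ 2)) ≤ 1 →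
      (∫ t in Ioi (x p), F.f t ^ 2) ≤ δ := by
  intro δ hδ
  obtain ⟨ε, hε, hεδ⟩ : ∃ ε > 0, 8 * ε ^ 2 ≤ δ :=
    ⟨√(δ / 8), by positivity, by rw [Real.sq_sqrt (by positivity)]; linarith⟩
  obtain ⟨X, hX⟩ := eventually_atTop.1 ((hMol ε hε).eventually_ge_atTop (4 * ε / δ))
  obtain ⟨K, hK⟩ := eventually_atTop.1 (hmean.eventually_ge_atTop (2 / δ))
  obtain ⟨P, hP⟩ := eventually_atTop.1 (hxtop.eventually_ge_atTop X)
  refine ⟨max K P, fun F hsum hle => ?_⟩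
  have hx_nonneg : ∀ k, 0 ≤ x k := fun k => hx0 ▸ hmono.monotone k.zero_le
  have hq0 : ∀ k, 0 ≤ᵐ[volume.restrict (Ioo (x k) (x (k + 1)))] q := fun k =>
    (ae_restrict_of_ae_restrict_of_subset (fun t ht => (hx_nonneg k).trans_lt ht.1) hq1).mono
      fun t ht => zero_le_one.trans ht
  have hcell : ∀ k, max K P ≤ k → ∫ t in Ioo (x k) (x (k + 1)), F.f t ^ 2 ≤
      δ * ∫ t in Ioo (x k) (x (k + 1)), (F.f' t ^ 2 + q t * F.f t ^ 2) := by
    intro k hk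
    have hd : 0 < x (k + 1) - x k := sub_pos.2 (hmono k.lt_succ_self)
    refine F.integral_sq_Ioo_cell_le hε hεδ (hmono k.lt_succ_self) (hq _ _ (hx_nonneg k))
      (hq0 k) (fun y hy => (div_le_iff₀' hδ).1 (hX y ?_)) ?_
    · linarith [hP P le_rfl, hmono.monotone (le_of_max_le_right hk)]
    · have := hK k (le_of_max_le_left hk)
      rwa [one_div_mul_eq_div, le_div_iff₀ hd, div_mul_eq_mul_div, div_le_iff₀' hδ] at this
  exact (F.integral_Ioi_sq_le_mul_tsum hmono.monotone hxtop hq0 hsum hδ.le _ hcell).trans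
    (mul_le_of_le_one_right hδ.le hle)

/-- **Core of the sufficiency part of Theorem 3.4** (discreteness of `H^N_{X,q}`):
if `d^* < ∞`, `q ≥ 1` a.e., Molchanov's condition holds and
`(1/d_k) ∫_Δₖ q → ∞`, then the tails of functions in the unit ball of the
Neumann form are uniformly small. -/
theorem stmt_11 (x : ℕ → ℝ) (hx0 : x 0 = 0) (hmono : StrictMono x)
    (hxtop : Tendsto x atTop atTop)
    (D : ℝ) (hD : ∀ k, x (k + 1) - x k ≤ D)
    (q : ℝ → ℝ) (hq : ∀ a b : ℝ, 0 ≤ a → IntegrableOn q (Icc a b) volume)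
    (hq1 : ∀ᵐ t ∂(volume.restrict (Ioi (0 : ℝ))), 1 ≤ q t)
    (hMol : ∀ ε > 0, Tendsto (fun X : ℝ => ∫ t in Icc X (X + ε), q t) atTop atTop)
    (hmean : Tendsto (fun k =>
      (1 / (x (k + 1) - x k)) * ∫ t in Icc (x k) (x (k + 1)), q t) atTop atTop) :
    ∀ δ > 0, ∃ p : ℕ, ∀ F : PW1 x,
      Summable (fun k => ∫ t in Ioo (x k) (x (k + 1)), (F.f' t ^ 2 + q t * F.f t ^ 2)) →
      (∑' k, ∫ t in Ioo (x k) (x (k + 1)), (F.f' t ^ 2 + q t * F.f t ^ 2)) ≤ 1 →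
      (∫ t in Ioi (x p), F.f t ^ 2) ≤ δ :=
  stmt_11_general x hx0 hmono hxtop q hq hq1 hMol hmean

end
end

section
/- Assume d^* < ∞ and lim_{k→∞} (1/d_k) ∫_{Δ_k} |q(x)| dx = 0. Then lim_{x→∞} ∫_x^{x+1} |q(t)| dt = 0. -/
open MeasureTheory Set Filter


/-- **Remark 4.3** (condition (4.24) implies Birman's condition (4.28)):
if `d^* < ∞` and `(1/d_k) ∫_Δₖ |q| → 0`, then `∫_x^(x+1) |q| → 0` as `x → ∞`. -/
theorem stmt_12 (x : ℕ → ℝ) (hx0 : x 0 = 0) (hmono : StrictMono x)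
    (hxtop : Tendsto x atTop atTop)
    (q : ℝ → ℝ) (hq : ∀ a b : ℝ, 0 ≤ a → IntegrableOn q (Icc a b) volume)
    (D : ℝ) (hD : ∀ k, x (k + 1) - x k ≤ D)
    (hq0 : Tendsto (fun k =>
      (1 / (x (k + 1) - x k)) * ∫ t in Icc (x k) (x (k + 1)), |q t|)
      atTop (nhds 0)) :
    Tendsto (fun X : ℝ => ∫ t in Icc X (X + 1), |q t|) atTop (nhds 0) := by
  have hd : ∀ k, 0 < x (k+1) - x k := fun k => sub_pos.2 (hmono k.lt_succ_self)
  have hD0 : 0 < D := lt_of_lt_of_le (hd 0) (hD 0)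
  have hxnn : ∀ k, 0 ≤ x k := fun k => hx0 ▸ hmono.monotone (Nat.zero_le k)
  have hqa : ∀ a b : ℝ, 0 ≤ a → IntegrableOn (fun t => |q t|) (Icc a b) volume :=
    fun a b ha => (hq a b ha).abs
  have hint : ∀ a b : ℝ, 0 ≤ a → a ≤ b →
      IntervalIntegrable (fun t => |q t|) volume a b := by
    intro a b ha hab
    exact IntegrableOn.intervalIntegrable (by rw [Set.uIcc_of_le hab]; exact hqa a b ha)
  rw [Metric.tendsto_atTop] at hq0 ⊢
  intro ε hε
  set c := ε / (2 + 2*D) with hc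
  have hc0 : 0 < c := div_pos hε (by linarith)
  obtain ⟨K, hK⟩ := hq0 c hc0
  have key : ∀ k, K ≤ k → (∫ t in Icc (x k) (x (k+1)), |q t|) ≤ c * (x (k+1) - x k) := by
    intro k hk
    have h := hK k hk
    rw [Real.dist_eq, sub_zero] at h
    have h2 : (1 / (x (k+1) - x k)) * ∫ t in Icc (x k) (x (k+1)), |q t| < c :=
      lt_of_abs_lt h
    rw [one_div, inv_mul_eq_div, div_lt_iff₀ (hd k)] at h2
    exact h2.le
  refine ⟨x (K+1) + 1, fun X hX => ?_⟩
  have hX0 : 0 ≤ X := le_trans (by linarith [hxnn (K+1)]) hX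
  have hXK : x (K+1) ≤ X := by linarith
  -- find m with x m ≤ X < x (m+1)
  have hex : ∃ j, X < x j := (hxtop.eventually_gt_atTop X).exists
  have hj1 : Nat.find hex ≠ 0 := by
    intro h
    have := Nat.find_spec hex
    rw [h, hx0] at this
    linarith
  obtain ⟨m, hm⟩ := Nat.exists_eq_succ_of_ne_zero hj1
  have hm1 : X < x (m+1) := by have h := Nat.find_spec hex; rwa [hm] at h
  have hm0 : x m ≤ X := le_of_not_gt (Nat.find_min hex (by omega))
  -- find minimal n with X+1 ≤ x n
  have hex2 : ∃ j, X + 1 ≤ x j := (hxtop.eventually_ge_atTop (X+1)).exists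
  set n := Nat.find hex2 with hn
  have hn1 : X + 1 ≤ x n := Nat.find_spec hex2
  have hn0 : n ≠ 0 := by
    intro h
    rw [h, hx0] at hn1
    linarith
  obtain ⟨n', hn'⟩ := Nat.exists_eq_succ_of_ne_zero hn0
  have hn'lt : x n' < X + 1 := lt_of_not_ge (Nat.find_min hex2 (by omega))
  have hxn : x n < X + 1 + D := by
    rw [hn']
    have := hD n'
    linarith
  have hxm : X - D < x m := by
    have := hD m
    linarith
  have hmK : K ≤ m := by
    by_contra h
    push_neg at h
    have : x (m+1) ≤ x (K+1) := hmono.monotone (by omega)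
    linarith
  have hmn : m < n := by
    have : x m < x n := by linarith
    exact hmono.lt_iff_lt.mp this
  -- sum of adjacent interval integrals
  set L := n - m with hL
  have hmL : m + L = n := by omega
  have hintadj : ∀ i, i < L → IntervalIntegrable (fun t => |q t|) volume (x (m+i)) (x (m+i+1)) :=
    fun i _ => hint _ _ (hxnn _) (hmono (m+i).lt_succ_self).le
  have hsum := intervalIntegral.sum_integral_adjacent_intervals
    (f := fun t => |q t|) (μ := volume) (a := fun i => x (m+i)) (n := L)
    (fun i hi => hintadj i hi)
  simp only [Nat.add_zero] at hsum
  rw [hmL] at hsum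
  have hmnle : x m ≤ x n := (hmono hmn).le
  have step1 : (∫ t in Icc X (X+1), |q t|) ≤ ∫ t in Icc (x m) (x n), |q t| := by
    apply setIntegral_mono_set (hqa _ _ (hxnn m))
    · exact Eventually.of_forall fun t => abs_nonneg _
    · exact (Icc_subset_Icc hm0 (le_trans hn1 le_rfl)).eventuallyLE
  have step2 : (∫ t in Icc (x m) (x n), |q t|) = ∫ t in (x m)..(x n), |q t| := by
    rw [intervalIntegral.integral_of_le hmnle, integral_Icc_eq_integral_Ioc]
  have step3 : (∫ t in (x m)..(x n), |q t|) ≤ c * (x n - x m) := by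
    rw [← hsum]
    have hterm : ∀ i ∈ Finset.range L,
        (∫ t in (x (m+i))..(x (m+i+1)), |q t|) ≤ c * (x (m+i+1) - x (m+i)) := by
      intro i _
      rw [intervalIntegral.integral_of_le (hmono (m+i).lt_succ_self).le,
        ← integral_Icc_eq_integral_Ioc]
      exact key (m+i) (by omega)
    calc ∑ i ∈ Finset.range L, ∫ t in (x (m+i))..(x (m+i+1)), |q t|
        ≤ ∑ i ∈ Finset.range L, c * (x (m+i+1) - x (m+i)) :=
          Finset.sum_le_sum hterm
      _ = c * ∑ i ∈ Finset.range L, (x (m+(i+1)) - x (m+i)) := by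
          rw [Finset.mul_sum]
          congr 1
      _ = c * (x (m+L) - x (m+0)) := by rw [Finset.sum_range_sub (fun i => x (m+i)) L]
      _ = c * (x n - x m) := by rw [hmL, Nat.add_zero]
  have hfin : (∫ t in Icc X (X+1), |q t|) < ε := by
    have h4 : c * (x n - x m) < c * (2 + 2*D) := by
      apply mul_lt_mul_of_pos_left _ hc0
      linarith
    have h5 : c * (2 + 2*D) = ε := by
      rw [hc]
      field_simp
    calc (∫ t in Icc X (X+1), |q t|) ≤ c * (x n - x m) := by
          rw [step2] at step1; exact le_trans step1 step3
      _ < ε := by rw [← h5]; exact h4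
  rw [Real.dist_eq, sub_zero, abs_of_nonneg
    (setIntegral_nonneg measurableSet_Icc fun t _ => abs_nonneg _)]
  exact hfin
end

section
/- Assume q ∈ L¹_loc([0,∞)) with q(x) ≥ 0 for a.e. x, lim_{k→∞} d_k = 0, and (1/d_k) ∫_{Δ_k} q(x) dx → ∞ as k → ∞. Then q satisfies Molchanov's condition: for every ε > 0, ∫_x^{x+ε} q(t) dt → ∞ as x → ∞. -/
/-!
Once `d_k ≤ δ` and `∫_{Δ_k} q ≥ c d_k` for all `k ≥ K`, any interval `[a, b]` with `a ≥ x_K`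
contains a run of consecutive intervals `Δ_k` covering all of it except at most `δ` at each end.
Summing the bounds over that run and using `q ≥ 0` gives `∫_a^b q ≥ c (b - a - 2δ)`; with
`δ = ε/4` and `c` arbitrarily large this is Molchanov's condition.
-/

open MeasureTheory Set Filter

theorem setIntegral_Icc_eq_intervalIntegral {E : Type*} [NormedAddCommGroup E] [NormedSpace ℝ E]
    {μ : Measure ℝ} [NullSingletonClass μ] {f : ℝ → E} {a b : ℝ} (hab : a ≤ b) :
    ∫ t in Icc a b, f t ∂μ = ∫ t in a..b, f t ∂μ := by
  rw [integral_Icc_eq_integral_Ioc, intervalIntegral.integral_of_le hab]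

section

variable {μ : Measure ℝ} [NullSingletonClass μ] {x : ℕ → ℝ} {f : ℝ → ℝ} {c : ℝ}

theorem mul_sub_le_setIntegral_Icc_of_forall_Ico (hx : Monotone x) {m n : ℕ} (hmn : m ≤ n)
    (hf : IntegrableOn f (Icc (x m) (x n)) μ)
    (hstep : ∀ k ∈ Finset.Ico m n,
      c * (x (k + 1) - x k) ≤ ∫ t in Icc (x k) (x (k + 1)), f t ∂μ) :
    c * (x n - x m) ≤ ∫ t in Icc (x m) (x n), f t ∂μ := by
  have hsub : ∀ k, m ≤ k → k < n → Icc (x k) (x (k + 1)) ⊆ Icc (x m) (x n) := fun k hmk hkn =>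
    Icc_subset_Icc (hx hmk) (hx hkn)
  rw [setIntegral_Icc_eq_intervalIntegral (hx hmn),
    ← intervalIntegral.sum_integral_adjacent_intervals_Ico hmn fun k hk =>
      (hf.mono_set ((uIcc_of_le (hx k.le_succ)).trans_subset (hsub k hk.1 hk.2))).intervalIntegrable,
    ← Finset.sum_Ico_sub x hmn, Finset.mul_sum]
  refine Finset.sum_le_sum fun k hk => ?_
  rw [← setIntegral_Icc_eq_intervalIntegral (hx k.le_succ)]
  exact hstep k hk

theorem exists_mem_Ioc_of_forall_sub_le (hx : Monotone x) (htop : Tendsto x atTop atTop)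
    {K : ℕ} {δ a : ℝ} (hstep : ∀ k ≥ K, x (k + 1) - x k ≤ δ) (ha : x K ≤ a) :
    ∃ m, K < m ∧ x m ∈ Ioc a (a + δ) := by
  classical
  have hex : ∃ m, a < x m := (htop.eventually_gt_atTop a).exists
  set m := Nat.find hex
  have hKm : K < m := hx.reflect_lt (ha.trans_lt (Nat.find_spec hex))
  have hprev : x (m - 1) ≤ a := not_lt.1 (Nat.find_min hex (Nat.sub_one_lt (by omega)))
  have hlast := hstep (m - 1) (by omega)
  rw [Nat.sub_add_cancel (by omega)] at hlast
  exact ⟨m, hKm, Nat.find_spec hex, by linarith⟩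

theorem mul_le_setIntegral_Icc_of_forall_ge (hx : Monotone x) (htop : Tendsto x atTop atTop)
    {K : ℕ} {a b δ : ℝ} (hc : 0 ≤ c) (hstep : ∀ k ≥ K, x (k + 1) - x k ≤ δ)
    (hmean : ∀ k ≥ K, c * (x (k + 1) - x k) ≤ ∫ t in Icc (x k) (x (k + 1)), f t ∂μ)
    (hKa : x K ≤ a) (hab : a + 2 * δ ≤ b) (hf : IntegrableOn f (Icc a b) μ)
    (hf0 : 0 ≤ᵐ[μ.restrict (Icc a b)] f) :
    c * (b - a - 2 * δ) ≤ ∫ t in Icc a b, f t ∂μ := by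
  have hδ : 0 ≤ δ := (sub_nonneg.2 (hx K.le_succ)).trans (hstep K le_rfl)
  obtain ⟨m, hKm, hma, hmδ⟩ := exists_mem_Ioc_of_forall_sub_le hx htop hstep hKa
  obtain ⟨n, -, hnb, hnδ⟩ :=
    exists_mem_Ioc_of_forall_sub_le hx htop hstep (a := b - δ) (by linarith)
  have hmn : m ≤ n := (hx.reflect_lt (by linarith : x m < x n)).le
  have hsub : Icc (x m) (x n) ⊆ Icc a b := Icc_subset_Icc hma.le (by linarith)
  calc c * (b - a - 2 * δ) ≤ c * (x n - x m) := mul_le_mul_of_nonneg_left (by linarith) hc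
    _ ≤ ∫ t in Icc (x m) (x n), f t ∂μ :=
      mul_sub_le_setIntegral_Icc_of_forall_Ico hx hmn (hf.mono_set hsub)
        fun k hk => hmean k (hKm.le.trans (Finset.mem_Ico.1 hk).1)
    _ ≤ ∫ t in Icc a b, f t ∂μ := setIntegral_mono_set hf hf0 hsub.eventuallyLE

end

theorem stmt_14_general (x : ℕ → ℝ) (hmono : StrictMono x)
    (hxtop : Tendsto x atTop atTop)
    (q : ℝ → ℝ) (hq : ∀ a b : ℝ, 0 ≤ a → IntegrableOn q (Icc a b) volume)
    (hq0 : ∀ᵐ t ∂(volume.restrict (Ioi (0 : ℝ))), 0 ≤ q t)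
    (hd0 : Tendsto (fun k => x (k + 1) - x k) atTop (nhds 0))
    (hmean : Tendsto (fun k =>
      (1 / (x (k + 1) - x k)) * ∫ t in Icc (x k) (x (k + 1)), q t) atTop atTop) :
    ∀ ε > 0, Tendsto (fun X : ℝ => ∫ t in Icc X (X + ε), q t) atTop atTop := by
  intro ε hε
  refine tendsto_atTop.2 fun C => ?_
  set c := max C 0 / (ε / 2)
  obtain ⟨K, hK⟩ := eventually_atTop.1
    ((hmean.eventually_ge_atTop c).and (hd0.eventually_le_const (by positivity : 0 < ε / 4)))
  have hmeanK : ∀ k ≥ K, c * (x (k + 1) - x k) ≤ ∫ t in Icc (x k) (x (k + 1)), q t := by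
    intro k hk
    rw [← le_div_iff₀ (sub_pos.2 (hmono k.lt_succ_self)), ← one_div_mul_eq_div]
    exact (hK k hk).1
  filter_upwards [eventually_gt_atTop (max (x K) 0)] with X hX
  have hC : C ≤ c * (X + ε - X - 2 * (ε / 4)) := by
    rw [show X + ε - X - 2 * (ε / 4) = ε / 2 by ring, div_mul_cancel₀ _ (by positivity)]
    exact le_max_left C 0
  exact hC.trans <| mul_le_setIntegral_Icc_of_forall_ge hmono.monotone hxtop (by positivity)
    (fun k hk => (hK k hk).2) hmeanK ((le_max_left _ _).trans hX.le) (by linarith)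
    (hq X (X + ε) ((le_max_right _ _).trans hX.le))
    (ae_restrict_of_ae_restrict_of_subset
      (fun t ht => (le_max_right _ _).trans_lt (hX.trans_le ht.1)) hq0)

/-- **Corollary 3.6**: if `q ≥ 0` a.e., `d_k → 0` and `(1/d_k) ∫_Δₖ q → ∞`,
then `q` satisfies Molchanov's condition. -/
theorem stmt_14 (x : ℕ → ℝ) (hx0 : x 0 = 0) (hmono : StrictMono x)
    (hxtop : Tendsto x atTop atTop)
    (q : ℝ → ℝ) (hq : ∀ a b : ℝ, 0 ≤ a → IntegrableOn q (Icc a b) volume)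
    (hq0 : ∀ᵐ t ∂(volume.restrict (Ioi (0 : ℝ))), 0 ≤ q t)
    (hd0 : Tendsto (fun k => x (k + 1) - x k) atTop (nhds 0))
    (hmean : Tendsto (fun k =>
      (1 / (x (k + 1) - x k)) * ∫ t in Icc (x k) (x (k + 1)), q t) atTop atTop) :
    ∀ ε > 0, Tendsto (fun X : ℝ => ∫ t in Icc X (X + ε), q t) atTop atTop :=
  stmt_14_general x hmono hxtop q hq hq0 hd0 hmean
end
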